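/- arXiv:1905.03975 — 4 statements merged into one kernel-verified Lean document; each statement's English description precedes it below -/
import Mathlib

section
/- The strong metric dimension of the Jahangir graph J(3,3) equals 3. -/
/-- The generalized Jahangir graph `J(n,m)`: vertices are `none` (the central
vertex `c`) and `some a` for `a : ZMod (n*m)` (the cycle vertex `u_{a+1}`).
Cycle vertices are adjacent when consecutive, and `c` is adjacent to
`u_{nk+1}`, i.e. to `some (n*k)`, for `k = 0, …, m-1`. -/
def jahangir (n m : ℕ) : SimpleGraph (Option (ZMod (n * m))) where
  Adj x y :=
    (x = none ∧ ∃ a : ZMod (n * m), y = some a ∧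
        ∃ k : ℕ, k < m ∧ a = ((n * k : ℕ) : ZMod (n * m))) ∨
    (y = none ∧ ∃ a : ZMod (n * m), x = some a ∧
        ∃ k : ℕ, k < m ∧ a = ((n * k : ℕ) : ZMod (n * m))) ∨
    (∃ a b : ZMod (n * m), x = some a ∧ y = some b ∧ a ≠ b ∧ (b = a + 1 ∨ a = b + 1))
  symm := by
    constructor
    rintro x y (⟨hx, a, hy, hk⟩ | ⟨hy, a, hx, hk⟩ | ⟨a, b, hx, hy, hab, h⟩)
    · exact Or.inr (Or.inl ⟨hx, a, hy, hk⟩)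
    · exact Or.inl ⟨hy, a, hx, hk⟩
    · exact Or.inr (Or.inr ⟨b, a, hy, hx, hab.symm, h.symm⟩)
  loopless := by
    constructor
    rintro x (⟨hx, a, hy, _⟩ | ⟨hy, a, hx, _⟩ | ⟨a, b, hx, hy, hab, _⟩)
    · rw [hx] at hy; exact nomatch hy
    · rw [hy] at hx; exact nomatch hx
    · rw [hx] at hy; exact hab (Option.some.inj hy)

/-- `u` and `v` are mutually maximally distant in `G`. -/
def MMD {V : Type*} (G : SimpleGraph V) (u v : V) : Prop :=
  (∀ w, G.Adj u w → G.dist w v ≤ G.dist u v) ∧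
  (∀ w, G.Adj v w → G.dist u w ≤ G.dist u v)

/-- The strong resolving graph of `G`: distinct vertices are adjacent iff MMD. -/
def strongResolvingGraph {V : Type*} (G : SimpleGraph V) : SimpleGraph V where
  Adj u v := u ≠ v ∧ MMD G u v
  symm := by
    constructor
    rintro u v ⟨hne, h1, h2⟩
    refine ⟨hne.symm, ?_, ?_⟩
    · intro w hw
      rw [SimpleGraph.dist_comm, SimpleGraph.dist_comm (u := v)]
      exact h2 w hw
    · intro w hw
      rw [SimpleGraph.dist_comm, SimpleGraph.dist_comm (u := v)]
      exact h1 w hw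
  loopless := by constructor; intro u h; exact h.1 rfl

/-- The vertex covering number `α(G)`. -/
noncomputable def vertexCoverNumber {V : Type*} (G : SimpleGraph V) : ℕ :=
  sInf {k | ∃ S : Finset V, S.card = k ∧ ∀ u v, G.Adj u v → u ∈ S ∨ v ∈ S}

/-- The independence number `β(G)`. -/
noncomputable def indepNumber {V : Type*} (G : SimpleGraph V) : ℕ :=
  sSup {k | ∃ S : Finset V, S.card = k ∧ ∀ u ∈ S, ∀ v ∈ S, ¬ G.Adj u v}

/-- `W` is a strong resolving set of `G`. -/
def IsStrongResolvingSet {V : Type*} (G : SimpleGraph V) (W : Set V) : Prop :=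
  ∀ u v : V, u ≠ v → ∃ w ∈ W,
    G.dist u w = G.dist u v + G.dist v w ∨ G.dist v w = G.dist v u + G.dist u w

/-- The strong metric dimension of `G`. -/
noncomputable def sdim {V : Type*} (G : SimpleGraph V) : ℕ :=
  sInf {k | ∃ W : Finset V, W.card = k ∧ IsStrongResolvingSet G ↑W}

/-- Vertex set of the internal cycle `c u_{nk+1} … u_{n(k+1)+1} c` of `J(n,m)`. -/
def internalCycle (n m k : ℕ) : Set (Option (ZMod (n * m))) :=
  insert none {x | ∃ i ≤ n, x = some ((n * k + i : ℕ) : ZMod (n * m))}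

/-- Cycle vertices of `J(n,m)` not adjacent to the central vertex `c` (the set `U₂`). -/
def inU2 (n m : ℕ) (x : Option (ZMod (n * m))) : Prop :=
  ∃ a : ZMod (n * m), x = some a ∧ ¬ ∃ k : ℕ, k < m ∧ a = ((n * k : ℕ) : ZMod (n * m))

/-- Explicit distance function for `jahangir 3 3`. -/
def fdist : Option (ZMod (3*3)) → Option (ZMod (3*3)) → ℕ
  | none, none => 0
  | none, some a => if a.val % 3 = 0 then 1 else 2
  | some a, none => if a.val % 3 = 0 then 1 else 2
  | some a, some b =>
      min (min ((a-b).val) (9 - (a-b).val))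
        ((if a.val % 3 = 0 then 1 else 2) + (if b.val % 3 = 0 then 1 else 2))

instance decAux (n m : ℕ) (a : ZMod (n*m)) :
    Decidable (∃ k : ℕ, k < m ∧ a = ((n*k : ℕ) : ZMod (n*m))) :=
  decidable_of_iff (∃ k : Fin m, a = ((n*(k:ℕ) : ℕ) : ZMod (n*m))) (by
    constructor
    · rintro ⟨k, h⟩; exact ⟨k, k.2, h⟩
    · rintro ⟨k, hk, h⟩; exact ⟨⟨k, hk⟩, h⟩)

instance jadjDec : DecidableRel (jahangir 3 3).Adj := fun x y => by
  show Decidable ((x = none ∧ ∃ a : ZMod (3*3), y = some a ∧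
        ∃ k : ℕ, k < 3 ∧ a = ((3 * k : ℕ) : ZMod (3*3))) ∨
    (y = none ∧ ∃ a : ZMod (3*3), x = some a ∧
        ∃ k : ℕ, k < 3 ∧ a = ((3 * k : ℕ) : ZMod (3*3))) ∨
    (∃ a b : ZMod (3*3), x = some a ∧ y = some b ∧ a ≠ b ∧ (b = a + 1 ∨ a = b + 1)))
  infer_instance

lemma fdist_key0 : ∀ u, fdist u u = 0 := by decide

lemma fdist_key1 : ∀ u v w, (jahangir 3 3).Adj u w → fdist u v ≤ fdist w v + 1 := by decide

lemma fdist_key2 : ∀ u v, u ≠ v → ∃ w, (jahangir 3 3).Adj u w ∧ fdist w v + 1 = fdist u v := by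
  decide

lemma exists_walk_fdist :
    ∀ n (u v : Option (ZMod (3*3))), fdist u v = n →
      ∃ p : (jahangir 3 3).Walk u v, p.length = n := by
  intro n
  induction n using Nat.strong_induction_on with
  | _ n ih =>
    intro u v hn
    by_cases huv : u = v
    · subst huv
      have h0 := fdist_key0 u
      rw [h0] at hn
      exact ⟨SimpleGraph.Walk.nil, by simp [← hn]⟩
    · obtain ⟨w, hadj, hw⟩ := fdist_key2 u v huv
      have hlt : fdist w v < n := by omega
      obtain ⟨p, hp⟩ := ih (fdist w v) hlt w v rfl
      exact ⟨SimpleGraph.Walk.cons hadj p, by simp [hp]; omega⟩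

lemma fdist_le_walk : ∀ {u v : Option (ZMod (3*3))} (p : (jahangir 3 3).Walk u v),
    fdist u v ≤ p.length := by
  intro u v p
  induction p with
  | nil => simp [fdist_key0]
  | cons h p ih =>
    refine le_trans (fdist_key1 _ _ _ h) ?_
    simp only [SimpleGraph.Walk.length_cons]
    omega

lemma dist_eq_fdist : ∀ u v, (jahangir 3 3).dist u v = fdist u v := by
  intro u v
  obtain ⟨p, hp⟩ := exists_walk_fdist (fdist u v) u v rfl
  have hr : (jahangir 3 3).Reachable u v := ⟨p⟩
  refine le_antisymm (le_trans (SimpleGraph.dist_le p) (le_of_eq hp)) ?_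
  obtain ⟨q, hq⟩ := hr.exists_walk_length_eq_dist
  exact hq ▸ fdist_le_walk q

lemma srs_three :
    ∀ u v : Option (ZMod (3*3)), u ≠ v →
      ∃ w ∈ ({some 1, some 4, some 7} : Finset (Option (ZMod (3*3)))),
        fdist u w = fdist u v + fdist v w ∨ fdist v w = fdist v u + fdist u w := by
  decide

lemma no_two_aux :
    ∀ a b : Option (ZMod (3*3)), ∃ u v : Option (ZMod (3*3)), u ≠ v ∧
      ∀ w, (w = a ∨ w = b) →
        ¬(fdist u w = fdist u v + fdist v w ∨ fdist v w = fdist v u + fdist u w) := by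
  decide

lemma no_two :
    ∀ W : Finset (Option (ZMod (3*3))), W.card ≤ 2 →
      ∃ u v : Option (ZMod (3*3)), u ≠ v ∧
      ∀ w ∈ W,
        ¬(fdist u w = fdist u v + fdist v w ∨ fdist v w = fdist v u + fdist u w) := by
  intro W hW
  have : ∃ a b, ∀ w ∈ W, w = a ∨ w = b := by
    interval_cases h : W.card
    · exact ⟨none, none, fun w hw => absurd hw (by simp [Finset.card_eq_zero.mp h])⟩
    · obtain ⟨a, rfl⟩ := Finset.card_eq_one.mp h
      exact ⟨a, a, fun w hw => Or.inl (Finset.mem_singleton.mp hw)⟩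
    · obtain ⟨a, b, -, rfl⟩ := Finset.card_eq_two.mp h
      exact ⟨a, b, fun w hw => by simpa using hw⟩
  obtain ⟨a, b, hab⟩ := this
  obtain ⟨u, v, huv, hbad⟩ := no_two_aux a b
  exact ⟨u, v, huv, fun w hw => hbad w (hab w hw)⟩

theorem stmt_4 : sdim (jahangir 3 3) = 3 := by
  have h3 : 3 ∈ {k | ∃ W : Finset (Option (ZMod (3*3))), W.card = k ∧
      IsStrongResolvingSet (jahangir 3 3) ↑W} := by
    refine ⟨{some 1, some 4, some 7}, by decide, ?_⟩
    intro u v huv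
    obtain ⟨w, hw, hcond⟩ := srs_three u v huv
    exact ⟨w, by simpa using hw, by simpa only [dist_eq_fdist] using hcond⟩
  refine le_antisymm (Nat.sInf_le h3) (le_csInf ⟨3, h3⟩ ?_)
  rintro k ⟨W, hcard, hres⟩
  by_contra hk
  push_neg at hk
  have hWle : W.card ≤ 2 := by omega
  obtain ⟨u, v, huv, hbad⟩ := no_two W hWle
  obtain ⟨w, hwW, hcond⟩ := hres u v huv
  rw [dist_eq_fdist, dist_eq_fdist, dist_eq_fdist, dist_eq_fdist] at hcond
  exact hbad w (by simpa using hwW) hcond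
end

section
/- Let n > 5 be even and m ≥ 4. In J(n,m), for two internal cycles C = c u_{nk+1} … u_{n(k+1)+1} c and C' = c u_{n(k+1)+1} … u_{n(k+2)+1} c sharing exactly one edge, and vertices x ∈ V(C), y ∈ V(C'), one has d(x,y) = n+1 if and only if {x,y} = {u_{nk+n/2+1}, u_{n(k+1)+n/2+2}} or {x,y} = {u_{nk+n/2}, u_{n(k+1)+n/2+1}} (indices modulo nm). -/
namespace JahAux

open SimpleGraph

lemma mod_small {N x : ℕ} (h0 : 0 < N) (h : x < N + N) :
    x % N = if x < N then x else x - N := by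
  split
  · exact Nat.mod_eq_of_lt ‹_›
  · rw [Nat.mod_eq_sub_mod (le_of_not_gt ‹_›)]
    exact Nat.mod_eq_of_lt (by omega)

/-- Cyclic distance on `ZMod N`. -/
def cyc (N : ℕ) (a b : ZMod N) : ℕ := min (b - a).val (a - b).val

/-- Potential function: distance to the center in `J(n,m)`. -/
def pot (n m : ℕ) : Option (ZMod (n * m)) → ℕ
  | none => 0
  | some a => 1 + min (a.val % n) (n - a.val % n)

lemma val_sum_cases {N : ℕ} [NeZero N] (a b : ZMod N) :
    (b - a).val + (a - b).val = 0 ∨ (b - a).val + (a - b).val = N := by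
  have hd : (b - a).val < N := ZMod.val_lt _
  have he : (a - b).val < N := ZMod.val_lt _
  have h0 : (0 : ℕ) = ((b - a).val + (a - b).val) % N := by
    have h := ZMod.val_add (b - a) (a - b)
    rw [show (b - a) + (a - b) = 0 from by ring] at h
    simpa using h
  rw [mod_small (by omega) (by omega)] at h0
  split_ifs at h0 <;> omega

lemma cyc_step {N : ℕ} (hN : 2 ≤ N) (a a' b : ZMod N)
    (h : a' = a + 1 ∨ a = a' + 1) : cyc N a b ≤ cyc N a' b + 1 := by
  haveI : NeZero N := ⟨by omega⟩
  have h1 : (1 : ZMod N).val = 1 := by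
    rw [ZMod.val_one_eq_one_mod]; exact Nat.mod_eq_of_lt hN
  have hd : (b - a).val < N := ZMod.val_lt _
  have he : (a - b).val < N := ZMod.val_lt _
  have hd' : (b - a').val < N := ZMod.val_lt _
  have he' : (a' - b).val < N := ZMod.val_lt _
  have hs := val_sum_cases a b
  have hs' := val_sum_cases a' b
  rcases h with h | h
  · have hd2 : (b - a).val = ((b - a').val + 1) % N := by
      rw [show b - a = (b - a') + 1 from by rw [h]; ring, ZMod.val_add, h1]
    have he2 : (a' - b).val = ((a - b).val + 1) % N := by
      rw [show a' - b = (a - b) + 1 from by rw [h]; ring, ZMod.val_add, h1]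
    rw [mod_small (by omega) (by omega)] at hd2 he2
    unfold cyc
    split_ifs at hd2 he2 <;> omega
  · have hd2 : (b - a').val = ((b - a).val + 1) % N := by
      rw [show b - a' = (b - a) + 1 from by rw [h]; ring, ZMod.val_add, h1]
    have he2 : (a - b).val = ((a' - b).val + 1) % N := by
      rw [show a - b = (a' - b) + 1 from by rw [h]; ring, ZMod.val_add, h1]
    rw [mod_small (by omega) (by omega)] at hd2 he2
    unfold cyc
    split_ifs at hd2 he2 <;> omega

lemma walk_cyc {n m : ℕ} (hN : 2 ≤ n * m) :
    ∀ {x y : Option (ZMod (n * m))} (p : (jahangir n m).Walk x y),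
      Option.none ∉ p.support → ∀ a b, x = some a → y = some b →
        cyc (n * m) a b ≤ p.length := by
  haveI : NeZero (n * m) := ⟨by omega⟩
  intro x y p
  induction p with
  | nil =>
    intro _ a b hx hy
    rw [hx] at hy
    obtain rfl : a = b := Option.some.inj hy
    simp [cyc]
  | @cons u w v h q ih =>
    intro hp a b hx hy
    rw [Walk.support_cons, List.mem_cons] at hp
    push_neg at hp
    obtain ⟨hpu, hpq⟩ := hp
    have hw : w ≠ none := fun hw => hpq (hw ▸ q.start_mem_support)
    obtain ⟨a'', rfl⟩ : ∃ a'', w = some a'' := by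
      cases w with
      | none => exact absurd rfl hw
      | some a'' => exact ⟨a'', rfl⟩
    rcases h with ⟨hu0, _⟩ | ⟨hw0, _⟩ | ⟨a₀, b₀, hua, hwb, _, hstep⟩
    · rw [hx] at hu0; exact absurd hu0 (by simp)
    · exact absurd hw0 (by simp)
    · rw [hx] at hua
      obtain rfl : a = a₀ := Option.some.inj hua
      obtain rfl : a'' = b₀ := Option.some.inj hwb
      have := ih hpq a'' b rfl hy
      have hstep' := cyc_step hN a a'' b (by tauto)
      show cyc (n * m) a b ≤ q.length + 1
      omega

lemma pot_step {n : ℕ} (hn : 5 < n) {r r' : ℕ} (hr : r < n) (hr' : r' = (r + 1) % n) :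
    1 + min r (n - r) ≤ (1 + min r' (n - r')) + 1 ∧
    1 + min r' (n - r') ≤ (1 + min r (n - r)) + 1 := by
  rw [mod_small (by omega) (by omega)] at hr'
  split_ifs at hr' <;> omega

lemma pot_adj {n m : ℕ} (hn : 5 < n) (hm : 4 ≤ m) {u v : Option (ZMod (n * m))}
    (h : (jahangir n m).Adj u v) :
    pot n m u ≤ pot n m v + 1 ∧ pot n m v ≤ pot n m u + 1 := by
  haveI : NeZero (n * m) := ⟨Nat.mul_ne_zero (by omega) (by omega)⟩
  have hdvd : n ∣ n * m := ⟨m, rfl⟩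
  have hub : ∀ (k : ℕ), pot n m (some ((n * k : ℕ) : ZMod (n * m))) = 1 := by
    intro k
    simp only [pot, ZMod.val_natCast, Nat.mod_mod_of_dvd _ hdvd, Nat.mul_mod_right]
    omega
  rcases h with ⟨hu, a, hv, k, hk, ha⟩ | ⟨hv, a, hu, k, hk, ha⟩ | ⟨a, b, hu, hv, hne, hstep⟩
  · subst hu hv ha
    rw [hub k]
    simp [pot]
  · subst hu hv ha
    rw [hub k]
    simp [pot]
  · subst hu hv
    have hval : ∀ c : ZMod (n * m), (c + 1).val % n = (c.val % n + 1) % n := by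
      intro c
      have h1 : (1 : ZMod (n * m)).val = 1 := by
        rw [ZMod.val_one_eq_one_mod]; exact Nat.mod_eq_of_lt (by nlinarith)
      rw [ZMod.val_add, Nat.mod_mod_of_dvd _ hdvd, h1, Nat.add_mod,
        Nat.mod_eq_of_lt (show (1 : ℕ) < n by omega)]
    rcases hstep with rfl | rfl
    · have h := pot_step hn (r := a.val % n) (r' := (a + 1).val % n)
        (Nat.mod_lt _ (by omega)) (hval a)
      simpa [pot] using h
    · have h := pot_step hn (r := b.val % n) (r' := (b + 1).val % n)
        (Nat.mod_lt _ (by omega)) (hval b)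
      simp only [pot]
      omega


lemma walk_pot {n m : ℕ} (hn : 5 < n) (hm : 4 ≤ m) {x y : Option (ZMod (n * m))}
    (p : (jahangir n m).Walk x y) : pot n m x ≤ pot n m y + p.length := by
  induction p with
  | nil => simp
  | cons h q ih =>
    have := (pot_adj hn hm h).1
    rw [Walk.length_cons]
    omega

lemma add_one_ne {N : ℕ} (h2 : 2 ≤ N) (a : ZMod N) : a ≠ a + 1 := by
  haveI : NeZero N := ⟨by omega⟩
  intro h
  have h0 : (0 : ZMod N) = 1 := by
    have := congrArg (fun z => z - a) h
    simpa using this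
  have := congrArg ZMod.val h0
  rw [ZMod.val_zero, ZMod.val_one_eq_one_mod, Nat.mod_eq_of_lt h2] at this
  omega

lemma exists_walkUp {n m : ℕ} (hn : 5 < n) (hm : 4 ≤ m) (L : ℕ) :
    ∀ a : ZMod (n * m), ∃ p : (jahangir n m).Walk (some a) (some (a + (L : ZMod (n * m)))),
      p.length = L := by
  have h2 : 2 ≤ n * m := by nlinarith
  induction L with
  | zero =>
    intro a
    exact ⟨SimpleGraph.Walk.nil.copy rfl (by simp), by simp⟩
  | succ L ih =>
    intro a
    obtain ⟨p, hp⟩ := ih (a + 1)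
    have hadj : (jahangir n m).Adj (some a) (some (a + 1)) :=
      Or.inr (Or.inr ⟨a, a + 1, rfl, rfl, add_one_ne h2 a, Or.inl rfl⟩)
    refine ⟨(SimpleGraph.Walk.cons hadj p).copy rfl (by push_cast; ring_nf), ?_⟩
    simp [hp]

lemma hub_adj {n m : ℕ} (hm : 4 ≤ m) (j : ℕ) :
    (jahangir n m).Adj none (some ((n * j : ℕ) : ZMod (n * m))) := by
  refine Or.inl ⟨rfl, _, rfl, j % m, Nat.mod_lt _ (by omega), ?_⟩
  have h : n * j = n * m * (j / m) + n * (j % m) := by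
    calc n * j = n * (m * (j / m) + j % m) := by rw [Nat.div_add_mod]
    _ = n * m * (j / m) + n * (j % m) := by ring
  rw [h, Nat.cast_add, Nat.cast_mul (n * m) _, ZMod.natCast_self, zero_mul, zero_add]

lemma exists_walk_none {n m : ℕ} (hn : 5 < n) (hm : 4 ≤ m) (j i : ℕ) (hi : i ≤ n) :
    ∃ p : (jahangir n m).Walk (some ((n * j + i : ℕ) : ZMod (n * m))) none,
      p.length ≤ 1 + min i (n - i) := by
  rcases le_or_gt i (n - i) with hc | hc
  · obtain ⟨p, hp⟩ := exists_walkUp hn hm i ((n * j : ℕ) : ZMod (n * m))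
    refine ⟨((SimpleGraph.Walk.cons (hub_adj hm j) p).copy rfl
      (by rw [← Nat.cast_add])).reverse, ?_⟩
    simp [hp]
    omega
  · obtain ⟨p, hp⟩ := exists_walkUp hn hm (n - i) ((n * j + i : ℕ) : ZMod (n * m))
    have he : (n * j + i) + (n - i) = n * (j + 1) := by
      have : n * (j + 1) = n * j + n := by ring
      omega
    refine ⟨(p.copy rfl (by rw [← Nat.cast_add, he])).concat (hub_adj hm (j + 1)).symm, ?_⟩
    rw [SimpleGraph.Walk.length_concat, SimpleGraph.Walk.length_copy, hp]
    omega

lemma cyc_value {n m : ℕ} (hn : 5 < n) (hm : 4 ≤ m) (k i i' : ℕ) (hi : i ≤ n) (hi' : i' ≤ n) :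
    cyc (n * m) ((n * k + i : ℕ) : ZMod (n * m)) ((n * k + n + i' : ℕ) : ZMod (n * m)) =
      n + i' - i := by
  haveI : NeZero (n * m) := ⟨Nat.mul_ne_zero (by omega) (by omega)⟩
  have h4 : n * 4 ≤ n * m := Nat.mul_le_mul_left n hm
  set a : ZMod (n * m) := ((n * k + i : ℕ) : ZMod (n * m)) with ha
  set b : ZMod (n * m) := ((n * k + n + i' : ℕ) : ZMod (n * m)) with hb
  set D : ℕ := n + i' - i with hD
  have hsub : b - a = (D : ZMod (n * m)) := by
    rw [ha, hb, show n * k + n + i' = (n * k + i) + D from by omega]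
    push_cast
    ring
  have hDlt : D < n * m := by omega
  have hd : (b - a).val = D := by rw [hsub, ZMod.val_natCast, Nat.mod_eq_of_lt hDlt]
  have hsub2 : a - b = -(D : ZMod (n * m)) := by rw [← hsub]; ring
  rcases Nat.eq_zero_or_pos D with h0 | h0
  · unfold cyc
    rw [hd, hsub2, h0]
    simp
  · have hne : (D : ZMod (n * m)) ≠ 0 := by
      intro h
      have := congrArg ZMod.val h
      rw [ZMod.val_natCast, Nat.mod_eq_of_lt hDlt, ZMod.val_zero] at this
      omega
    unfold cyc
    rw [hd, hsub2, ZMod.neg_val, if_neg hne, ZMod.val_natCast, Nat.mod_eq_of_lt hDlt]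
    omega

lemma pot_value {n m : ℕ} (hn : 5 < n) (hm : 4 ≤ m) (j i : ℕ) (hi : i ≤ n) :
    pot n m (some ((n * j + i : ℕ) : ZMod (n * m))) = 1 + min i (n - i) := by
  haveI : NeZero (n * m) := ⟨Nat.mul_ne_zero (by omega) (by omega)⟩
  simp only [pot, ZMod.val_natCast, Nat.mod_mod_of_dvd _ ⟨m, rfl⟩, Nat.add_comm (n * j) i,
    Nat.add_mul_mod_self_left]
  rcases eq_or_lt_of_le hi with h | h
  · subst h
    simp [Nat.mod_self]
  · rw [Nat.mod_eq_of_lt h]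
lemma dist_none_le {n m : ℕ} (hn : 5 < n) (hm : 4 ≤ m) (j i : ℕ) (hi : i ≤ n) :
    (jahangir n m).dist (some ((n * j + i : ℕ) : ZMod (n * m))) none ≤ 1 + min i (n - i) := by
  obtain ⟨p, hp⟩ := exists_walk_none hn hm j i hi
  exact le_trans (SimpleGraph.dist_le p) hp

lemma dist_formula {n m : ℕ} (hn : 5 < n) (hm : 4 ≤ m) (k i i' : ℕ) (hi : i ≤ n)
    (hi' : i' ≤ n) :
    (jahangir n m).dist (some ((n * k + i : ℕ) : ZMod (n * m)))
        (some ((n * k + n + i' : ℕ) : ZMod (n * m))) =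
      min (n + i' - i) (2 + min i (n - i) + min i' (n - i')) := by
  haveI : NeZero (n * m) := ⟨Nat.mul_ne_zero (by omega) (by omega)⟩
  have h2 : 2 ≤ n * m := by nlinarith
  set a : ZMod (n * m) := ((n * k + i : ℕ) : ZMod (n * m)) with ha
  set b : ZMod (n * m) := ((n * k + n + i' : ℕ) : ZMod (n * m)) with hb
  -- the cycle walk
  obtain ⟨p₀, hp₀⟩ := exists_walkUp hn hm (n + i' - i) a
  have hab : a + ((n + i' - i : ℕ) : ZMod (n * m)) = b := by
    rw [ha, hb, ← Nat.cast_add, show n * k + i + (n + i' - i) = n * k + n + i' from by omega]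
  have hA : (jahangir n m).dist (some a) (some b) ≤ n + i' - i := by
    have := SimpleGraph.dist_le (p₀.copy rfl (by rw [hab]))
    rwa [SimpleGraph.Walk.length_copy, hp₀] at this
  have hB : (jahangir n m).dist (some a) (some b) ≤ 2 + min i (n - i) + min i' (n - i') := by
    obtain ⟨p, hp⟩ := exists_walk_none hn hm k i hi
    obtain ⟨q, hq⟩ := exists_walk_none hn hm (k + 1) i' hi'
    have hq' : (some ((n * (k + 1) + i' : ℕ) : ZMod (n * m)) : Option (ZMod (n * m))) =
        some b := by
      rw [show n * (k + 1) + i' = n * k + n + i' from by ring, hb]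
    have := SimpleGraph.dist_le (p.append (q.copy hq' rfl).reverse)
    rw [SimpleGraph.Walk.length_append, SimpleGraph.Walk.length_reverse,
      SimpleGraph.Walk.length_copy] at this
    have h3 : (jahangir n m).dist (some a) (some b) ≤ p.length + q.length := this
    omega
  refine le_antisymm (le_min hA hB) ?_
  have hreach : (jahangir n m).Reachable (some a) (some b) :=
    ⟨p₀.copy rfl (by rw [hab])⟩
  obtain ⟨p, hp⟩ := hreach.exists_walk_length_eq_dist
  by_cases hc : Option.none ∈ p.support
  · have hsplit := congrArg SimpleGraph.Walk.length (p.take_spec hc)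
    rw [SimpleGraph.Walk.length_append] at hsplit
    have h1 := walk_pot hn hm (p.takeUntil none hc)
    have h2' := walk_pot hn hm (p.dropUntil none hc).reverse
    rw [SimpleGraph.Walk.length_reverse] at h2'
    simp only [pot] at h1 h2'
    have hpa : pot n m (some a) = 1 + min i (n - i) := pot_value hn hm k i hi
    have hpb : pot n m (some b) = 1 + min i' (n - i') := by
      rw [hb, show n * k + n + i' = n * (k + 1) + i' from by ring]
      exact pot_value hn hm (k + 1) i' hi'
    simp only [pot] at hpa hpb
    rw [hpa] at h1
    rw [hpb] at h2'
    omega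
  · have hlen := walk_cyc h2 p hc a b rfl rfl
    have hcv : cyc (n * m) a b = n + i' - i := cyc_value hn hm k i i' hi hi'
    omega
end JahAux

theorem stmt_6 (n m : ℕ) (hn : 5 < n) (hev : Even n) (hm : 4 ≤ m) (k : ℕ) (hk : k < m)
    (x y : Option (ZMod (n * m)))
    (hx : x ∈ internalCycle n m k) (hy : y ∈ internalCycle n m (k + 1)) :
    (jahangir n m).dist x y = n + 1 ↔
      (({x, y} : Set (Option (ZMod (n * m)))) =
        {some ((n * k + n / 2 : ℕ) : ZMod (n * m)), some ((n * (k + 1) + n / 2 + 1 : ℕ) : ZMod (n * m))} ∨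
       ({x, y} : Set (Option (ZMod (n * m)))) =
        {some ((n * k + n / 2 - 1 : ℕ) : ZMod (n * m)), some ((n * (k + 1) + n / 2 : ℕ) : ZMod (n * m))}) := by
  obtain ⟨s, hs⟩ := hev
  have hs3 : 3 ≤ s := by omega
  have hhalf : n / 2 = s := by omega
  have hkn : n * (k + 1) = n * k + n := by ring
  constructor
  · intro hdist
    rcases Set.mem_insert_iff.mp hx with hx0 | ⟨i, hi, hxi⟩
    · exfalso
      rcases Set.mem_insert_iff.mp hy with hy0 | ⟨i', hi', hyi⟩
      · rw [hx0, hy0, SimpleGraph.dist_self] at hdist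
        omega
      · rw [hx0, hyi, SimpleGraph.dist_comm] at hdist
        have := JahAux.dist_none_le hn hm (k + 1) i' hi'
        omega
    · rcases Set.mem_insert_iff.mp hy with hy0 | ⟨i', hi', hyi⟩
      · exfalso
        rw [hxi, hy0] at hdist
        have := JahAux.dist_none_le hn hm k i hi
        omega
      · rw [hxi, hyi, show n * (k + 1) + i' = n * k + n + i' from by ring,
          JahAux.dist_formula hn hm k i i' hi hi'] at hdist
        have hcases : (i = s ∧ i' = s + 1) ∨ (i = s - 1 ∧ i' = s) := by omega
        rcases hcases with ⟨hia, hib⟩ | ⟨hia, hib⟩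
        · left
          rw [hxi, hyi, show n * k + n / 2 = n * k + i from by omega,
            show n * (k + 1) + n / 2 + 1 = n * (k + 1) + i' from by omega]
        · right
          rw [hxi, hyi, show n * k + n / 2 - 1 = n * k + i from by omega,
            show n * (k + 1) + n / 2 = n * (k + 1) + i' from by omega]
  · intro hset
    rcases hset with h | h
    · rcases Set.pair_eq_pair_iff.mp h with ⟨hx1, hy1⟩ | ⟨hx1, hy1⟩
      · rw [hx1, hy1, show n * k + n / 2 = n * k + s from by omega,
          show n * (k + 1) + n / 2 + 1 = n * k + n + (s + 1) from by omega,
          JahAux.dist_formula hn hm k s (s + 1) (by omega) (by omega)]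
        omega
      · rw [hx1, hy1, SimpleGraph.dist_comm,
          show n * k + n / 2 = n * k + s from by omega,
          show n * (k + 1) + n / 2 + 1 = n * k + n + (s + 1) from by omega,
          JahAux.dist_formula hn hm k s (s + 1) (by omega) (by omega)]
        omega
    · rcases Set.pair_eq_pair_iff.mp h with ⟨hx1, hy1⟩ | ⟨hx1, hy1⟩
      · rw [hx1, hy1, show n * k + n / 2 - 1 = n * k + (s - 1) from by omega,
          show n * (k + 1) + n / 2 = n * k + n + s from by omega,
          JahAux.dist_formula hn hm k (s - 1) s (by omega) (by omega)]
        omega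
      · rw [hx1, hy1, SimpleGraph.dist_comm,
          show n * k + n / 2 - 1 = n * k + (s - 1) from by omega,
          show n * (k + 1) + n / 2 = n * k + n + s from by omega,
          JahAux.dist_formula hn hm k (s - 1) s (by omega) (by omega)]
        omega
end

section
/- Let n > 5 be even and m ≥ 4. For two vertices u_{nk+i}, u_{nk+j} on the same internal cycle of J(n,m) that are not adjacent to the central vertex c (i.e., i, j ∈ {2,…,n}), one has d(u_{nk+i}, u_{nk+j}) = n/2 + 1 if and only if |i − j| = n/2 + 1. -/
namespace Stmt8Aux
open SimpleGraph

/-- cyclic distance from `u` to `0` in `ZMod N`. -/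
def cycD (N : ℕ) (u : ZMod N) : ℕ := min u.val (N - u.val)

/-- reduction of a vertex index mod `n` (position within its internal cycle). -/
def rmap (n m : ℕ) (w : ZMod (n * m)) : ZMod n := ((w.val : ℕ) : ZMod n)

lemma cycD_zero (N : ℕ) (hN : 0 < N) : cycD N 0 = 0 := by
  haveI : NeZero N := ⟨by omega⟩
  simp [cycD]

lemma cycD_add_one (N : ℕ) (hN : 1 < N) (u : ZMod N) :
    cycD N (u + 1) ≤ cycD N u + 1 ∧ cycD N u ≤ cycD N (u + 1) + 1 := by
  haveI : NeZero N := ⟨by omega⟩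
  haveI : Fact (1 < N) := ⟨hN⟩
  have h1 : (u + 1).val = (u.val + 1) % N := by
    rw [ZMod.val_add, ZMod.val_one]
  have h2 : u.val < N := ZMod.val_lt u
  unfold cycD
  rcases lt_or_ge (u.val + 1) N with h | h
  · rw [h1, Nat.mod_eq_of_lt h]; omega
  · have h3 : (u.val + 1) % N = 0 := by
      rw [show u.val + 1 = N by omega]; exact Nat.mod_self N
    rw [h1, h3]; omega

lemma cycD_neg (N : ℕ) (hN : 0 < N) (u : ZMod N) : cycD N (-u) = cycD N u := by
  haveI : NeZero N := ⟨by omega⟩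
  unfold cycD
  rw [ZMod.neg_val]
  split_ifs with h
  · rw [h]; simp
  · have h1 : u.val < N := ZMod.val_lt u
    have h2 : u.val ≠ 0 := fun hc => h ((ZMod.val_eq_zero u).mp hc)
    omega

lemma cast_mod (n m x : ℕ) : ((x % (n * m) : ℕ) : ZMod n) = (x : ZMod n) := by
  conv_rhs => rw [← Nat.div_add_mod x (n * m)]
  push_cast [ZMod.natCast_self]
  ring

lemma rmap_natCast (n m x : ℕ) : rmap n m ((x : ℕ) : ZMod (n * m)) = (x : ZMod n) := by
  unfold rmap
  rw [ZMod.val_natCast]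
  exact cast_mod n m x

lemma rmap_add_one (n m : ℕ) (hn : 1 < n) (hm : 0 < m) (w : ZMod (n * m)) :
    rmap n m (w + 1) = rmap n m w + 1 := by
  haveI : NeZero (n * m) := ⟨by positivity⟩
  haveI : Fact (1 < n * m) := ⟨by nlinarith⟩
  unfold rmap
  rw [ZMod.val_add, ZMod.val_one, cast_mod]
  push_cast
  ring

lemma rmap_sub (n m : ℕ) (hn : 0 < n) (hm : 0 < m) (w w' : ZMod (n * m)) :
    rmap n m (w - w') = rmap n m w - rmap n m w' := by
  haveI : NeZero (n * m) := ⟨by positivity⟩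
  haveI : NeZero n := ⟨by omega⟩
  have key : ∀ u : ZMod (n * m), rmap n m u = ZMod.castHom ⟨m, rfl⟩ (ZMod n) u := by
    intro u
    rw [ZMod.castHom_apply, ← ZMod.natCast_val]
    rfl
  rw [key, key, key, map_sub]

lemma cycD_rmap_le (n m : ℕ) (hn : 1 < n) (hm : 0 < m) (w : ZMod (n * m)) :
    cycD n (rmap n m w) ≤ cycD (n * m) w := by
  haveI : NeZero (n * m) := ⟨by positivity⟩
  have hv : w.val < n * m := ZMod.val_lt w
  have hval : (rmap n m w).val = w.val % n := by
    unfold rmap; rw [ZMod.val_natCast]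
  set v := w.val with hvdef
  set r := v % n with hrdef
  have hr : r < n := Nat.mod_lt _ (by omega)
  have hq : n * (v / n) + r = v := Nat.div_add_mod v n
  set q := v / n with hqdef
  have hqm : q < m := by
    by_contra hc
    push_neg at hc
    have : n * m ≤ n * q := Nat.mul_le_mul_left n hc
    omega
  obtain ⟨d, hd⟩ : ∃ d, m = q + d + 1 := ⟨m - q - 1, by omega⟩
  have hB : n * m = n * q + n * d + n := by rw [hd]; ring
  unfold cycD
  rw [hval]
  refine le_min ?_ ?_
  · exact le_trans (min_le_left _ _) (Nat.mod_le v n)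
  · exact le_trans (min_le_right _ _) (by omega)

lemma adj_step (n m : ℕ) (h : 1 < n * m) (x : ZMod (n * m)) :
    (jahangir n m).Adj (some x) (some (x + 1)) := by
  haveI : NeZero (n * m) := ⟨by omega⟩
  haveI : Fact (1 < n * m) := ⟨h⟩
  refine Or.inr (Or.inr ⟨x, x + 1, rfl, rfl, ?_, Or.inl rfl⟩)
  intro hx
  have h10 : (1 : ZMod (n * m)) = 0 := left_eq_add.mp hx
  have := congrArg ZMod.val h10
  rw [ZMod.val_one, ZMod.val_zero] at this
  omega

lemma adj_center (n m : ℕ) (k' : ℕ) (hk' : k' < m) :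
    (jahangir n m).Adj none (some ((n * k' : ℕ) : ZMod (n * m))) :=
  Or.inl ⟨rfl, _, rfl, k', hk', rfl⟩

lemma exists_walk_add (n m : ℕ) (h : 1 < n * m) :
    ∀ (t : ℕ) (x : ZMod (n * m)),
      ∃ p : (jahangir n m).Walk (some x) (some (x + (t : ℕ))), p.length = t := by
  intro t
  induction t with
  | zero =>
    intro x
    refine ⟨(Walk.nil).copy rfl (congrArg some (by push_cast; ring)), ?_⟩
    simp
  | succ t ih =>
    intro x
    obtain ⟨p, hp⟩ := ih (x + 1)
    refine ⟨((Walk.cons (adj_step n m h x) p).copy rfl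
      (congrArg some (by push_cast; ring))), ?_⟩
    simp [hp]

lemma dist_add_le (n m : ℕ) (h : 1 < n * m) (x : ZMod (n * m)) (t : ℕ) :
    (jahangir n m).dist (some x) (some (x + (t : ℕ))) ≤ t := by
  obtain ⟨p, hp⟩ := exists_walk_add n m h t x
  have := SimpleGraph.dist_le p
  rw [hp] at this
  exact this

lemma dist_center_route (n m : ℕ) (hn : 1 < n) (hm : 0 < m) (k : ℕ) (hk : k < m)
    (x y : ZMod (n * m)) (s t : ℕ)
    (hx : x = ((n * k : ℕ) : ZMod (n * m)) + (s : ℕ))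
    (hy : y = ((n * (k + 1) : ℕ) : ZMod (n * m)) - (t : ℕ)) :
    (jahangir n m).dist (some x) (some y) ≤ s + t + 2 := by
  have hNm : 1 < n * m := by nlinarith
  obtain ⟨p1, hp1⟩ := exists_walk_add n m hNm s ((n * k : ℕ) : ZMod (n * m))
  obtain ⟨p2, hp2⟩ := exists_walk_add n m hNm t y
  have e1 : (jahangir n m).Adj (some ((n * k : ℕ) : ZMod (n * m))) none :=
    (adj_center n m k hk).symm
  have e2 : (jahangir n m).Adj none (some ((n * (k + 1) : ℕ) : ZMod (n * m))) := by
    rcases lt_or_ge (k + 1) m with h' | h'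
    · exact adj_center n m _ h'
    · have hkm : k + 1 = m := by omega
      have hcast : ((n * (k + 1) : ℕ) : ZMod (n * m)) = ((n * 0 : ℕ) : ZMod (n * m)) := by
        rw [hkm]; simp [ZMod.natCast_self]
      rw [hcast]
      exact adj_center n m 0 (by omega)
  have hyt : y + (t : ℕ) = ((n * (k + 1) : ℕ) : ZMod (n * m)) := by
    rw [hy]; exact sub_add_cancel _ _
  have hd := SimpleGraph.dist_le
    (((p1.copy rfl (congrArg some hx.symm)).reverse).append
      (Walk.cons e1 (Walk.cons e2 ((p2.copy rfl (congrArg some hyt)).reverse))))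
  simp only [Walk.length_append, Walk.length_cons, Walk.length_reverse,
    Walk.length_copy] at hd
  omega

/-- Lipschitz potential: lower-bounds distance from `a` in `J(n,m)`. -/
def fJ (n m : ℕ) (a : ZMod (n * m)) (i : ℕ) : Option (ZMod (n * m)) → ℕ
  | none => i
  | some s => min (cycD (n * m) (s - a)) (2 + cycD n (rmap n m s) + (i - 1))

lemma fJ_lip (n m : ℕ) (hn : 1 < n) (hm : 0 < m) (a : ZMod (n * m)) (i : ℕ)
    (hi : 2 ≤ i) (hra : cycD n (rmap n m a) = i - 1)
    (x y : Option (ZMod (n * m))) (hadj : (jahangir n m).Adj x y) :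
    fJ n m a i y ≤ fJ n m a i x + 1 := by
  have hN : 1 < n * m := by nlinarith
  have spoke_bounds : ∀ s : ZMod (n * m), rmap n m s = 0 →
      i - 1 ≤ fJ n m a i (some s) ∧ fJ n m a i (some s) ≤ i + 1 := by
    intro s hs
    have h1 : cycD n (rmap n m s) = 0 := by rw [hs]; exact cycD_zero n (by omega)
    have h2 : i - 1 ≤ cycD (n * m) (s - a) := by
      have := cycD_rmap_le n m hn hm (s - a)
      rw [rmap_sub n m (by omega) hm, hs, zero_sub, cycD_neg n (by omega), hra] at this
      omega
    constructor
    · simp only [fJ]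
      omega
    · simp only [fJ]
      have := min_le_right (cycD (n * m) (s - a)) (2 + cycD n (rmap n m s) + (i - 1))
      omega
  rcases hadj with ⟨hx, s, hy, k', hk', hsv⟩ | ⟨hy, s, hx, k', hk', hsv⟩ |
      ⟨α, β, hx, hy, hab, hstep⟩
  · subst hx; subst hy; subst hsv
    have hs : rmap n m ((n * k' : ℕ) : ZMod (n * m)) = 0 := by
      rw [rmap_natCast]; push_cast [ZMod.natCast_self]; ring
    have := (spoke_bounds _ hs).2
    simp only [fJ] at this ⊢
    omega
  · subst hx; subst hy; subst hsv
    have hs : rmap n m ((n * k' : ℕ) : ZMod (n * m)) = 0 := by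
      rw [rmap_natCast]; push_cast [ZMod.natCast_self]; ring
    have := (spoke_bounds _ hs).1
    simp only [fJ] at this ⊢
    omega
  · subst hx; subst hy
    rcases hstep with h1 | h1
    · subst h1
      have hc1 := cycD_add_one (n * m) hN (α - a)
      have hc2 := cycD_add_one n hn (rmap n m α)
      have he1 : α + 1 - a = (α - a) + 1 := by ring
      have he2 : rmap n m (α + 1) = rmap n m α + 1 := rmap_add_one n m hn hm α
      simp only [fJ, he1, he2]
      omega
    · subst h1
      have hc1 := cycD_add_one (n * m) hN (β - a)
      have hc2 := cycD_add_one n hn (rmap n m β)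
      have he1 : β + 1 - a = (β - a) + 1 := by ring
      have he2 : rmap n m (β + 1) = rmap n m β + 1 := rmap_add_one n m hn hm β
      simp only [fJ, he1, he2]
      omega

lemma fJ_walk (n m : ℕ) (hn : 1 < n) (hm : 0 < m) (a : ZMod (n * m)) (i : ℕ)
    (hi : 2 ≤ i) (hra : cycD n (rmap n m a) = i - 1) :
    ∀ {x y : Option (ZMod (n * m))} (p : (jahangir n m).Walk x y),
      fJ n m a i y ≤ fJ n m a i x + p.length := by
  intro x y p
  induction p with
  | nil => simp
  | cons h q ih =>
    have := fJ_lip n m hn hm a i hi hra _ _ h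
    simp only [Walk.length_cons]
    omega

lemma cycD_natCast_of_small (n m x : ℕ) (hn : 0 < n) (hm : 0 < m) (hx : x < n * m)
    (hx2 : 2 * x ≤ n * m) : cycD (n * m) ((x : ℕ) : ZMod (n * m)) = x := by
  haveI : NeZero (n * m) := ⟨by positivity⟩
  unfold cycD
  rw [ZMod.val_natCast, Nat.mod_eq_of_lt hx]
  omega

lemma rmap_val (n m k x : ℕ) (hn : 0 < n) (hx : x < n) :
    (rmap n m ((n * k + x : ℕ) : ZMod (n * m))).val = x := by
  rw [rmap_natCast]
  have : ((n * k + x : ℕ) : ZMod n) = ((x : ℕ) : ZMod n) := by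
    push_cast [ZMod.natCast_self]
    ring
  rw [this, ZMod.val_natCast, Nat.mod_eq_of_lt hx]

lemma main (n m : ℕ) (hn : 5 < n) (hev : Even n) (hm : 4 ≤ m) (k : ℕ) (hk : k < m)
    (i j : ℕ) (hi : 2 ≤ i) (hi' : i ≤ n) (hj : 2 ≤ j) (hj' : j ≤ n) (hij : i ≤ j) :
    (jahangir n m).dist (some ((n * k + i - 1 : ℕ) : ZMod (n * m)))
        (some ((n * k + j - 1 : ℕ) : ZMod (n * m))) = n / 2 + 1 ↔
      j - i = n / 2 + 1 := by
  obtain ⟨h, hh⟩ := hev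
  have hNm : 1 < n * m := by nlinarith
  have hnm2 : 2 * n ≤ n * m := by nlinarith
  have hb : ((n * k + j - 1 : ℕ) : ZMod (n * m)) =
      ((n * k + i - 1 : ℕ) : ZMod (n * m)) + ((j - i : ℕ) : ZMod (n * m)) := by
    rw [← Nat.cast_add]; congr 1; omega
  have hcyc_le : (jahangir n m).dist (some ((n * k + i - 1 : ℕ) : ZMod (n * m)))
      (some ((n * k + j - 1 : ℕ) : ZMod (n * m))) ≤ j - i := by
    rw [hb]; exact dist_add_le n m hNm _ _
  constructor
  · intro hd
    by_contra hne
    rcases lt_or_gt_of_ne hne with hlt | hgt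
    · omega
    · have hx : ((n * k + i - 1 : ℕ) : ZMod (n * m)) =
          ((n * k : ℕ) : ZMod (n * m)) + ((i - 1 : ℕ) : ZMod (n * m)) := by
        rw [← Nat.cast_add]; congr 1; omega
      have hmulk : n * (k + 1) = n * k + n := by ring
      have hsum : ((n * (k + 1) : ℕ) : ZMod (n * m)) =
          ((n * k + j - 1 : ℕ) : ZMod (n * m)) + ((n + 1 - j : ℕ) : ZMod (n * m)) := by
        rw [← Nat.cast_add]; congr 1; omega
      have hy : ((n * k + j - 1 : ℕ) : ZMod (n * m)) =
          ((n * (k + 1) : ℕ) : ZMod (n * m)) - ((n + 1 - j : ℕ) : ZMod (n * m)) := by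
        rw [hsum]; ring
      have := dist_center_route n m (by omega) (by omega) k hk _ _ (i - 1) (n + 1 - j) hx hy
      omega
  · intro ht
    refine le_antisymm (by omega) ?_
    set a : ZMod (n * m) := ((n * k + i - 1 : ℕ) : ZMod (n * m)) with hadef
    set b : ZMod (n * m) := ((n * k + j - 1 : ℕ) : ZMod (n * m)) with hbdef
    have hi2 : 2 * i ≤ n := by omega
    have hra : cycD n (rmap n m a) = i - 1 := by
      have hv : (rmap n m a).val = i - 1 := by
        rw [hadef, show n * k + i - 1 = n * k + (i - 1) by omega]
        exact rmap_val n m k (i - 1) (by omega) (by omega)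
      unfold cycD
      rw [hv]
      omega
    have hreach : (jahangir n m).Reachable (some a) (some b) := by
      obtain ⟨p, _⟩ := exists_walk_add n m hNm (j - i) a
      rw [hb]
      exact ⟨p⟩
    obtain ⟨p, hp⟩ := hreach.exists_walk_length_eq_dist
    have hfw := fJ_walk n m (by omega) (by omega) a i hi hra p
    have hfa : fJ n m a i (some a) = 0 := by
      simp only [fJ, sub_self]
      rw [cycD_zero _ (by positivity)]
      simp
    have hfb : fJ n m a i (some b) = n / 2 + 1 := by
      have hba : b - a = ((j - i : ℕ) : ZMod (n * m)) := by rw [hb]; ring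
      have h1 : cycD (n * m) (b - a) = j - i := by
        rw [hba]
        exact cycD_natCast_of_small n m (j - i) (by omega) (by omega) (by omega) (by omega)
      have h2 : (rmap n m b).val = j - 1 := by
        rw [hbdef, show n * k + j - 1 = n * k + (j - 1) by omega]
        exact rmap_val n m k (j - 1) (by omega) (by omega)
      have h3 : cycD n (rmap n m b) = n + 1 - j := by
        unfold cycD; rw [h2]; omega
      simp only [fJ, h1, h3]
      omega
    rw [hfa, hfb, hp] at hfw
    omega

end Stmt8Aux

theorem stmt_8 (n m : ℕ) (hn : 5 < n) (hev : Even n) (hm : 4 ≤ m) (k : ℕ) (hk : k < m)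
    (i j : ℕ) (hi : 2 ≤ i) (hi' : i ≤ n) (hj : 2 ≤ j) (hj' : j ≤ n) :
    (jahangir n m).dist (some ((n * k + i - 1 : ℕ) : ZMod (n * m))) (some ((n * k + j - 1 : ℕ) : ZMod (n * m))) = n / 2 + 1 ↔
      max i j - min i j = n / 2 + 1 := by
  rcases le_total i j with hij | hij
  · rw [show max i j - min i j = j - i by omega]
    exact Stmt8Aux.main n m hn hev hm k hk i j hi hi' hj hj' hij
  · rw [show max i j - min i j = i - j by omega, SimpleGraph.dist_comm]
    exact Stmt8Aux.main n m hn hev hm k hk j i hj hj' hi hi' hij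
end

section
/- Let n ≥ 5 be odd and m ≥ 4. In J(n,m), two distinct vertices x, y on the same internal cycle are mutually maximally distant if and only if both are cycle vertices not adjacent to the central vertex c and d(x,y) = ⌊n/2⌋ + 1. -/
open SimpleGraph

section Aux
variable {n m : ℕ}

private lemma zone_ne_zero (h2 : 2 ≤ n * m) : (1 : ZMod (n * m)) ≠ 0 := by
  haveI : NeZero (n * m) := ⟨by omega⟩
  intro h
  have h' := congrArg ZMod.val h
  rw [ZMod.val_one_eq_one_mod, ZMod.val_zero, Nat.mod_eq_of_lt h2] at h'
  exact one_ne_zero h'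

private lemma adj_succ (h2 : 2 ≤ n * m) (a : ZMod (n * m)) :
    (jahangir n m).Adj (some a) (some (a + 1)) := by
  refine Or.inr (Or.inr ⟨a, a + 1, rfl, rfl, ?_, Or.inl rfl⟩)
  intro h
  exact zone_ne_zero h2 (left_eq_add.mp h)

private lemma adj_spoke {k : ℕ} (hk : k < m) :
    (jahangir n m).Adj (none : Option (ZMod (n*m))) (some ((n * k : ℕ) : ZMod (n * m))) :=
  Or.inl ⟨rfl, _, rfl, k, hk, rfl⟩

private lemma exists_walk_add (h2 : 2 ≤ n * m) (a : ZMod (n * m)) (t : ℕ) :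
    ∃ w : (jahangir n m).Walk (some a) (some (a + (t : ℕ))), w.length = t := by
  induction t with
  | zero => exact ⟨Walk.nil.copy rfl (by simp), by simp⟩
  | succ t ih =>
      obtain ⟨w, hw⟩ := ih
      refine ⟨(w.concat (adj_succ h2 (a + t))).copy rfl (by push_cast; ring_nf), ?_⟩
      simp [Walk.length_concat, hw]

private lemma dist_add_le (h2 : 2 ≤ n * m) (a : ZMod (n * m)) (t : ℕ) :
    (jahangir n m).dist (some a) (some (a + (t : ℕ))) ≤ t := by
  obtain ⟨w, hw⟩ := exists_walk_add h2 a t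
  exact le_trans (SimpleGraph.dist_le w) hw.le

end Aux

section Aux2
variable {n m : ℕ}

/-- `hf a` is the distance from the center to `some a` (to be proved). -/
private def hf (n m : ℕ) (a : ZMod (n * m)) : ℕ := 1 + min (a.val % n) (n - a.val % n)

/-- cycle-only distance. -/
private def cy (n m : ℕ) (a b : ZMod (n * m)) : ℕ := min (b - a).val (n * m - (b - a).val)

private def Df (n m : ℕ) : Option (ZMod (n * m)) → Option (ZMod (n * m)) → ℕ
  | none, none => 0
  | none, some b => hf n m b
  | some a, none => hf n m a
  | some a, some b => min (cy n m a b) (hf n m a + hf n m b)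

private lemma hfN (hn : 5 ≤ n) (hm : 4 ≤ m) : 20 ≤ n * m := Nat.mul_le_mul hn hm

private lemma hf4n (hn : 5 ≤ n) (hm : 4 ≤ m) : 4 * n ≤ n * m := by
  calc 4 * n = n * 4 := by ring
  _ ≤ n * m := Nat.mul_le_mul_left n hm

private lemma val_natCast' (hn : 5 ≤ n) (hm : 4 ≤ m) (t : ℕ) :
    ((t : ZMod (n * m))).val = t % (n * m) := by
  haveI : NeZero (n * m) := ⟨by have := hfN hn hm; omega⟩
  exact ZMod.val_natCast (n * m) t

private lemma val_add' (hn : 5 ≤ n) (hm : 4 ≤ m) (a b : ZMod (n * m)) :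
    (a + b).val = (a.val + b.val) % (n * m) := by
  haveI : NeZero (n * m) := ⟨by have := hfN hn hm; omega⟩
  exact ZMod.val_add a b

private lemma val_one' (hn : 5 ≤ n) (hm : 4 ≤ m) : (1 : ZMod (n * m)).val = 1 := by
  haveI : Fact (1 < n * m) := ⟨by have := hfN hn hm; omega⟩
  exact ZMod.val_one (n * m)

private lemma val_lt' (hn : 5 ≤ n) (hm : 4 ≤ m) (a : ZMod (n * m)) : a.val < n * m := by
  haveI : NeZero (n * m) := ⟨by have := hfN hn hm; omega⟩
  exact ZMod.val_lt a

private lemma val_succ (hn : 5 ≤ n) (hm : 4 ≤ m) (a : ZMod (n * m)) :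
    (a + 1).val = (a.val + 1) % (n * m) := by
  rw [val_add' hn hm, val_one' hn hm]

/-- mod n of a val, key reduction -/
private lemma valmodn_succ (hn : 5 ≤ n) (hm : 4 ≤ m) (a : ZMod (n * m)) :
    (a + 1).val % n = (a.val % n + 1) % n := by
  rw [val_succ hn hm, Nat.mod_mod_of_dvd _ ⟨m, rfl⟩, Nat.add_mod,
    Nat.mod_eq_of_lt (show 1 < n by omega)]

private lemma mod_succ_cases (hn : 5 ≤ n) (v : ℕ) :
    (v % n + 1) % n = v % n + 1 ∧ v % n + 1 < n ∨ (v % n + 1) % n = 0 ∧ v % n = n - 1 := by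
  have h1 : v % n < n := Nat.mod_lt _ (by omega)
  rcases eq_or_lt_of_le (Nat.succ_le_of_lt h1) with h | h
  · right
    constructor
    · rw [show v % n + 1 = n by omega, Nat.mod_self]
    · omega
  · left
    exact ⟨Nat.mod_eq_of_lt h, h⟩

/-- Lipschitz property of hf along cycle edges -/
private lemma hf_lip (hn : 5 ≤ n) (hm : 4 ≤ m) (a : ZMod (n * m)) :
    hf n m a ≤ hf n m (a + 1) + 1 ∧ hf n m (a + 1) ≤ hf n m a + 1 := by
  have h1 := valmodn_succ hn hm a
  have h2 := mod_succ_cases hn a.val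
  have h3 : a.val % n < n := Nat.mod_lt _ (by omega)
  unfold hf
  omega

end Aux2

section Aux3
variable {n m : ℕ}

private lemma dv_lip (hn : 5 ≤ n) (hm : 4 ≤ m) (t : ZMod (n * m)) :
    min (t + 1).val (n * m - (t + 1).val) ≤ min t.val (n * m - t.val) + 1 ∧
    min t.val (n * m - t.val) ≤ min (t + 1).val (n * m - (t + 1).val) + 1 := by
  have h1 := val_succ hn hm t
  have h2 := val_lt' hn hm t
  have hN := hfN hn hm
  have hcase : (t.val + 1) % (n * m) = t.val + 1 ∨
      ((t.val + 1) % (n * m) = 0 ∧ t.val + 1 = n * m) := by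
    rcases eq_or_lt_of_le (Nat.succ_le_of_lt h2) with h | h
    · right; rw [show t.val + 1 = n * m by omega, Nat.mod_self]; omega
    · left; exact Nat.mod_eq_of_lt h
  omega

private lemma spoke_cy (hn : 5 ≤ n) (hm : 4 ≤ m) (s b : ZMod (n * m))
    (hs : s.val % n = 0) :
    min (b.val % n) (n - b.val % n) ≤ cy n m s b := by
  have hb : b.val = ((b - s).val + s.val) % (n * m) := by
    rw [← val_add' hn hm, sub_add_cancel]
  set d := (b - s).val with hd
  have h1 : b.val % n = d % n := by
    rw [hb, Nat.mod_mod_of_dvd _ ⟨m, rfl⟩, Nat.add_mod, hs, Nat.add_zero,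
      Nat.mod_mod_of_dvd _ dvd_rfl]
  have hdm := Nat.div_add_mod d n
  have hrlt : d % n < n := Nat.mod_lt _ (by omega)
  have hdlt : d < n * m := hd ▸ val_lt' hn hm (b - s)
  have hkey : d % n = 0 ∨ n * (d / n) + n ≤ n * m := by
    rcases Nat.eq_zero_or_pos (d % n) with h | h
    · exact Or.inl h
    · right
      have hq : d / n < m := by
        have : n * (d / n) < n * m := by omega
        exact Nat.lt_of_mul_lt_mul_left this
      have : n * (d / n + 1) ≤ n * m := Nat.mul_le_mul_left n hq
      rw [Nat.mul_add, Nat.mul_one] at this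
      exact this
  unfold cy
  rw [← hd]
  omega

private lemma spoke_valmod (hn : 5 ≤ n) (hm : 4 ≤ m) (k : ℕ) :
    ((n * k : ℕ) : ZMod (n * m)).val % n = 0 := by
  rw [val_natCast' hn hm, Nat.mod_mod_of_dvd _ ⟨m, rfl⟩, Nat.mul_mod_right]

private lemma Df_step (hn : 5 ≤ n) (hm : 4 ≤ m) {x z : Option (ZMod (n * m))}
    (h : (jahangir n m).Adj x z) (y : Option (ZMod (n * m))) :
    Df n m x y ≤ Df n m z y + 1 := by
  rcases h with ⟨hx, a, hz, k, hk, ha⟩ | ⟨hz, a, hx, k, hk, ha⟩ | ⟨a, b, hx, hz, hab, hstep⟩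
  · subst hx; subst hz
    cases y with
    | none => simp [Df]
    | some c =>
        have h3 := spoke_cy hn hm a c (by rw [ha]; exact spoke_valmod hn hm k)
        simp only [Df, hf] at *
        omega
  · subst hx; subst hz
    have ha' : a.val % n = 0 := by rw [ha]; exact spoke_valmod hn hm k
    cases y with
    | none => simp [Df, hf, ha']
    | some c => simp only [Df, hf, ha']; omega
  · subst hx; subst hz
    cases y with
    | none =>
        rcases hstep with h' | h'
        · subst h'; exact (hf_lip hn hm a).1
        · subst h'; exact (hf_lip hn hm b).2
    | some c =>
        have hcy : cy n m a c ≤ cy n m b c + 1 := by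
          rcases hstep with h' | h'
          · have h'' : c - b + 1 = c - a := by subst h'; ring
            unfold cy
            rw [← h'']
            exact (dv_lip hn hm (c - b)).1
          · have h'' : c - a + 1 = c - b := by subst h'; ring
            unfold cy
            rw [← h'']
            exact (dv_lip hn hm (c - a)).2
        have hhf : hf n m a ≤ hf n m b + 1 := by
          rcases hstep with h' | h'
          · subst h'; exact (hf_lip hn hm a).1
          · subst h'; exact (hf_lip hn hm b).2
        simp only [Df]
        omega

private lemma Df_le_walk (hn : 5 ≤ n) (hm : 4 ≤ m) :
    ∀ {x y : Option (ZMod (n * m))} (w : (jahangir n m).Walk x y),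
      Df n m x y ≤ w.length := by
  intro x y w
  induction w with
  | nil =>
      rename_i u
      cases u with
      | none => simp [Df]
      | some a =>
          haveI : NeZero (n * m) := ⟨by have := hfN hn hm; omega⟩
          simp [Df, cy, sub_self]
  | @cons u v w h p ih =>
      have := Df_step hn hm h w
      simp only [SimpleGraph.Walk.length_cons]
      omega

end Aux3

section Aux4
variable {n m : ℕ}

private lemma cast_val_eq (hn : 5 ≤ n) (hm : 4 ≤ m) (a : ZMod (n * m)) :
    ((a.val : ℕ) : ZMod (n * m)) = a := by
  haveI : NeZero (n * m) := ⟨by have := hfN hn hm; omega⟩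
  exact ZMod.natCast_rightInverse a

private lemma exists_walk_none_fwd (hn : 5 ≤ n) (hm : 4 ≤ m) (a : ZMod (n * m)) :
    ∃ w : (jahangir n m).Walk none (some a), w.length = 1 + a.val % n := by
  have hq : a.val / n < m := Nat.div_lt_of_lt_mul (val_lt' hn hm a)
  obtain ⟨w, hw⟩ := exists_walk_add (show 2 ≤ n * m by have := hfN hn hm; omega)
    ((n * (a.val / n) : ℕ) : ZMod (n * m)) (a.val % n)
  have hend : ((n * (a.val / n) : ℕ) : ZMod (n * m)) + ((a.val % n : ℕ) : ZMod (n * m)) = a := by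
    rw [← Nat.cast_add, Nat.div_add_mod, cast_val_eq hn hm]
  refine ⟨(SimpleGraph.Walk.cons (adj_spoke hq) w).copy rfl (congrArg some hend), ?_⟩
  simp only [SimpleGraph.Walk.length_copy, SimpleGraph.Walk.length_cons, hw]
  omega

private lemma exists_walk_none_bwd (hn : 5 ≤ n) (hm : 4 ≤ m) (a : ZMod (n * m)) :
    ∃ w : (jahangir n m).Walk none (some a), w.length = 1 + (n - a.val % n) := by
  have hq : (a.val / n + 1) % m < m := Nat.mod_lt _ (by omega)
  obtain ⟨w, hw⟩ := exists_walk_add (show 2 ≤ n * m by have := hfN hn hm; omega)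
    a (n - a.val % n)
  have hrlt : a.val % n < n := Nat.mod_lt _ (by omega)
  have hend : a + ((n - a.val % n : ℕ) : ZMod (n * m)) =
      ((n * ((a.val / n + 1) % m) : ℕ) : ZMod (n * m)) := by
    have h1 : m * ((a.val / n + 1) / m) + (a.val / n + 1) % m = a.val / n + 1 :=
      Nat.div_add_mod _ m
    have h2 : a.val + (n - a.val % n) = n * (a.val / n + 1) := by
      have := Nat.div_add_mod a.val n
      rw [Nat.mul_add, Nat.mul_one]
      omega
    have h3 : n * (a.val / n + 1) = n * m * ((a.val / n + 1) / m) + n * ((a.val / n + 1) % m) := by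
      calc n * (a.val / n + 1) = n * (m * ((a.val / n + 1) / m) + (a.val / n + 1) % m) := by
            rw [h1]
        _ = n * m * ((a.val / n + 1) / m) + n * ((a.val / n + 1) % m) := by ring
    calc a + ((n - a.val % n : ℕ) : ZMod (n * m))
        = ((a.val + (n - a.val % n) : ℕ) : ZMod (n * m)) := by
          rw [Nat.cast_add, cast_val_eq hn hm]
      _ = ((n * m * ((a.val / n + 1) / m) + n * ((a.val / n + 1) % m) : ℕ) : ZMod (n * m)) := by
          rw [h2, h3]
      _ = ((n * ((a.val / n + 1) % m) : ℕ) : ZMod (n * m)) := by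
          rw [Nat.cast_add, Nat.cast_mul, ZMod.natCast_self, zero_mul, zero_add]
  refine ⟨((w.copy rfl (congrArg some hend)).concat (adj_spoke hq).symm).reverse.copy rfl rfl, ?_⟩
  simp only [SimpleGraph.Walk.length_copy, SimpleGraph.Walk.length_reverse,
    SimpleGraph.Walk.length_concat, hw]
  omega

private lemma jconn (hn : 5 ≤ n) (hm : 4 ≤ m) : (jahangir n m).Connected := by
  have hr : ∀ w : Option (ZMod (n * m)), (jahangir n m).Reachable none w := by
    intro w
    cases w with
    | none => exact SimpleGraph.Reachable.refl none
    | some a => exact ⟨(exists_walk_none_fwd hn hm a).choose⟩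
  constructor
  intro u v
  exact (hr u).symm.trans (hr v)

private lemma dist_none_eq (hn : 5 ≤ n) (hm : 4 ≤ m) (a : ZMod (n * m)) :
    (jahangir n m).dist none (some a) = hf n m a := by
  refine le_antisymm ?_ ?_
  · obtain ⟨w1, hw1⟩ := exists_walk_none_fwd hn hm a
    obtain ⟨w2, hw2⟩ := exists_walk_none_bwd hn hm a
    have d1 := SimpleGraph.dist_le w1
    have d2 := SimpleGraph.dist_le w2
    unfold hf
    omega
  · obtain ⟨w, hw⟩ := (jconn hn hm).exists_walk_length_eq_dist none (some a)
    have := Df_le_walk hn hm w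
    rw [hw] at this
    exact this

private lemma dist_some_eq (hn : 5 ≤ n) (hm : 4 ≤ m) (a b : ZMod (n * m)) :
    (jahangir n m).dist (some a) (some b) = min (cy n m a b) (hf n m a + hf n m b) := by
  have h2 : 2 ≤ n * m := by have := hfN hn hm; omega
  refine le_antisymm ?_ ?_
  · have hc1 : (jahangir n m).dist (some a) (some b) ≤ (b - a).val := by
      have h := dist_add_le h2 a (b - a).val
      rwa [cast_val_eq hn hm, add_sub_cancel] at h
    have hc2 : (jahangir n m).dist (some a) (some b) ≤ n * m - (b - a).val := by
      have h := dist_add_le h2 b (n * m - (b - a).val)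
      have hval : (b - a).val ≤ n * m := le_of_lt (val_lt' hn hm _)
      have hend : b + (((n * m - (b - a).val : ℕ)) : ZMod (n * m)) = a := by
        rw [Nat.cast_sub hval, cast_val_eq hn hm]
        simp [ZMod.natCast_self]
      rw [hend] at h
      rw [SimpleGraph.dist_comm]
      exact h
    have hc3 : (jahangir n m).dist (some a) (some b) ≤ hf n m a + hf n m b := by
      have ht := (jconn hn hm).dist_triangle (u := some a) (v := (none : Option (ZMod (n*m)))) (w := some b)
      have hna : (jahangir n m).dist (some a) none = hf n m a := by
        rw [SimpleGraph.dist_comm]; exact dist_none_eq hn hm a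
      rw [hna, dist_none_eq hn hm b] at ht
      exact ht
    unfold cy
    omega
  · obtain ⟨w, hw⟩ := (jconn hn hm).exists_walk_length_eq_dist (some a) (some b)
    have := Df_le_walk hn hm w
    rw [hw] at this
    exact this

end Aux4

section Aux5
variable {n m : ℕ}

private lemma P_valmod (hn : 5 ≤ n) (hm : 4 ≤ m) (k p : ℕ) :
    ((n * k + p : ℕ) : ZMod (n * m)).val % n = p % n := by
  rw [val_natCast' hn hm, Nat.mod_mod_of_dvd _ ⟨m, rfl⟩, Nat.mul_add_mod]

private lemma modn_min (hn : 5 ≤ n) {p : ℕ} (hp : p ≤ n) :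
    min (p % n) (n - p % n) = min p (n - p) := by
  rcases eq_or_lt_of_le hp with h | h
  · rw [h, Nat.mod_self]; omega
  · rw [Nat.mod_eq_of_lt h]

private lemma hf_P (hn : 5 ≤ n) (hm : 4 ≤ m) (k : ℕ) {p : ℕ} (hp : p ≤ n) :
    hf n m ((n * k + p : ℕ) : ZMod (n * m)) = 1 + min p (n - p) := by
  unfold hf
  rw [P_valmod hn hm, modn_min hn hp]

private lemma P_sub (hn : 5 ≤ n) (hm : 4 ≤ m) (k : ℕ) {p q : ℕ} (hpq : p ≤ q) :
    ((n * k + q : ℕ) : ZMod (n * m)) - ((n * k + p : ℕ) : ZMod (n * m))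
      = ((q - p : ℕ) : ZMod (n * m)) := by
  have h : ((n * k + p : ℕ) : ZMod (n * m)) + ((q - p : ℕ) : ZMod (n * m))
      = ((n * k + q : ℕ) : ZMod (n * m)) := by
    rw [← Nat.cast_add]
    congr 1
    omega
  exact (eq_sub_of_add_eq (by rw [add_comm]; exact h)).symm

private lemma cy_P (hn : 5 ≤ n) (hm : 4 ≤ m) (k : ℕ) {p q : ℕ} (hpq : p ≤ q) (hq : q ≤ n) :
    cy n m ((n * k + p : ℕ) : ZMod (n * m)) ((n * k + q : ℕ) : ZMod (n * m)) = q - p := by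
  have h4 := hf4n hn hm
  unfold cy
  rw [P_sub hn hm k hpq, val_natCast' hn hm, Nat.mod_eq_of_lt (by omega)]
  omega

private lemma dist_P (hn : 5 ≤ n) (hm : 4 ≤ m) (k : ℕ) {p q : ℕ} (hpq : p ≤ q) (hq : q ≤ n) :
    (jahangir n m).dist (some ((n * k + p : ℕ) : ZMod (n * m)))
        (some ((n * k + q : ℕ) : ZMod (n * m)))
      = min (q - p) (2 + min p (n - p) + min q (n - q)) := by
  rw [dist_some_eq hn hm, cy_P hn hm k hpq hq, hf_P hn hm k (le_trans hpq hq), hf_P hn hm k hq]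
  omega

private lemma P_inj (hn : 5 ≤ n) (hm : 4 ≤ m) (k : ℕ) {p q : ℕ} (hp : p ≤ n) (hq : q ≤ n)
    (h : ((n * k + p : ℕ) : ZMod (n * m)) = ((n * k + q : ℕ) : ZMod (n * m))) : p = q := by
  have h4 := hf4n hn hm
  rcases le_total p q with hle | hle
  · have := P_sub hn hm k hle
    rw [h, sub_self] at this
    have hv := congrArg ZMod.val this.symm
    rw [val_natCast' hn hm, ZMod.val_zero, Nat.mod_eq_of_lt (by omega)] at hv
    omega
  · have := P_sub hn hm k hle
    rw [h, sub_self] at this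
    have hv := congrArg ZMod.val this.symm
    rw [val_natCast' hn hm, ZMod.val_zero, Nat.mod_eq_of_lt (by omega)] at hv
    omega

private lemma spoke_iff (hn : 5 ≤ n) (hm : 4 ≤ m) (A : ZMod (n * m)) :
    (∃ k : ℕ, k < m ∧ A = ((n * k : ℕ) : ZMod (n * m))) ↔ A.val % n = 0 := by
  constructor
  · rintro ⟨k, hk, rfl⟩
    exact spoke_valmod hn hm k
  · intro h
    refine ⟨A.val / n, Nat.div_lt_of_lt_mul (val_lt' hn hm A), ?_⟩
    have : n * (A.val / n) = A.val := by
      have := Nat.div_add_mod A.val n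
      omega
    rw [this, cast_val_eq hn hm]

private lemma inU2_P (hn : 5 ≤ n) (hm : 4 ≤ m) (k : ℕ) {p : ℕ} (hp : p ≤ n) :
    inU2 n m (some ((n * k + p : ℕ) : ZMod (n * m))) ↔ 0 < p ∧ p < n := by
  unfold inU2
  constructor
  · rintro ⟨a, ha, hno⟩
    rw [Option.some_inj] at ha
    subst ha
    rw [spoke_iff hn hm, P_valmod hn hm] at hno
    rcases eq_or_lt_of_le hp with h | h
    · exfalso; apply hno; rw [h, Nat.mod_self]
    · rw [Nat.mod_eq_of_lt h] at hno
      omega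
  · rintro ⟨h1, h2⟩
    refine ⟨_, rfl, ?_⟩
    rw [spoke_iff hn hm, P_valmod hn hm, Nat.mod_eq_of_lt h2]
    omega

private lemma MMD_comm {V : Type*} {G : SimpleGraph V} {x y : V} (h : MMD G x y) : MMD G y x := by
  refine ⟨fun w hw => ?_, fun w hw => ?_⟩
  · rw [SimpleGraph.dist_comm, SimpleGraph.dist_comm (u := y)]
    exact h.2 w hw
  · rw [SimpleGraph.dist_comm, SimpleGraph.dist_comm (u := y)]
    exact h.1 w hw

private lemma adj_some_cases (hn : 5 ≤ n) (hm : 4 ≤ m) {A : ZMod (n * m)}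
    {w : Option (ZMod (n * m))} (h : (jahangir n m).Adj (some A) w) :
    (w = none ∧ A.val % n = 0) ∨ w = some (A + 1) ∨ w = some (A - 1) := by
  rcases h with ⟨hx, _⟩ | ⟨hw, a, hx, k, hk, ha⟩ | ⟨a, b, hx, hw, hab, hstep⟩
  · exact absurd hx (by simp)
  · left
    refine ⟨hw, ?_⟩
    rw [Option.some_inj] at hx
    rw [← hx] at ha
    rw [ha]
    exact spoke_valmod hn hm k
  · rw [Option.some_inj] at hx
    subst hx
    rcases hstep with h' | h'
    · right; left; rw [hw, h']
    · right; right; rw [hw]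
      congr 1
      rw [h']
      exact (add_sub_cancel_right b 1).symm
end Aux5

section Aux6
variable {n m : ℕ}

private lemma dist_P_le (hn : 5 ≤ n) (hm : 4 ≤ m) (k : ℕ) {p q : ℕ}
    (hp : p ≤ n) (hq : q ≤ n) :
    (jahangir n m).dist (some ((n * k + p : ℕ) : ZMod (n * m)))
      (some ((n * k + q : ℕ) : ZMod (n * m))) ≤ n / 2 + 1 := by
  rcases le_total p q with h | h
  · rw [dist_P hn hm k h hq]; omega
  · rw [SimpleGraph.dist_comm, dist_P hn hm k h hp]; omega

private lemma cast_spoke_mod (hn : 5 ≤ n) (hm : 4 ≤ m) (t : ℕ) :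
    ((n * (t % m) : ℕ) : ZMod (n * m)) = ((n * t : ℕ) : ZMod (n * m)) := by
  have h : n * t = n * m * (t / m) + n * (t % m) := by
    calc n * t = n * (m * (t / m) + t % m) := by rw [Nat.div_add_mod]
    _ = n * m * (t / m) + n * (t % m) := by ring
  have h0 : ((n * m * (t / m) : ℕ) : ZMod (n * m)) = 0 := by
    rw [Nat.cast_mul, ZMod.natCast_self, zero_mul]
  rw [h, Nat.cast_add, h0, zero_add]

private lemma nm_pred_mod (hn : 5 ≤ n) (hm : 4 ≤ m) : (n * m - 1) % n = n - 1 := by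
  obtain ⟨m', rfl⟩ : ∃ m', m = m' + 1 := ⟨m - 1, by omega⟩
  have h1 : n * (m' + 1) = n * m' + n := by ring
  have h2 : n * m' + n - 1 = n * m' + (n - 1) := by omega
  rw [h1, h2, Nat.mul_add_mod, Nat.mod_eq_of_lt (by omega)]

private lemma valmod_pred (hn : 5 ≤ n) (hm : 4 ≤ m) (A : ZMod (n * m)) :
    (A - 1).val % n = (A.val % n + (n - 1)) % n := by
  have hN := hfN hn hm
  have hc : ((n * m - 1 : ℕ) : ZMod (n * m)) = -1 := by
    rw [Nat.cast_sub (by omega), Nat.cast_one, ZMod.natCast_self, zero_sub]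
  have h1 : A - 1 = A + ((n * m - 1 : ℕ) : ZMod (n * m)) := by rw [hc]; ring
  rw [h1, val_add' hn hm, val_natCast' hn hm, Nat.mod_eq_of_lt (show n*m-1 < n*m by omega),
    Nat.mod_mod_of_dvd _ ⟨m, rfl⟩, Nat.add_mod, nm_pred_mod hn hm]

private lemma hf_pred_spoke (hn : 5 ≤ n) (hm : 4 ≤ m) {A : ZMod (n * m)}
    (hA : A.val % n = 0) : hf n m (A - 1) = 2 := by
  unfold hf
  rw [valmod_pred hn hm, hA, Nat.zero_add, Nat.mod_eq_of_lt (by omega)]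
  omega

private lemma hf_succ_spoke (hn : 5 ≤ n) (hm : 4 ≤ m) {A : ZMod (n * m)}
    (hA : A.val % n = 0) : hf n m (A + 1) = 2 := by
  unfold hf
  rw [valmodn_succ hn hm, hA, Nat.zero_add, Nat.mod_eq_of_lt (by omega)]
  omega

/-- the far spoke beats the center: key for showing the center and spoke-adjacent
vertices are not maximally distant. -/
private lemma far_spoke (hn : 5 ≤ n) (hm : 4 ≤ m) {k : ℕ} (hk : k < m) {j : ℕ} (hj : j ≤ n) :
    n ≤ cy n m ((n * ((k + 2) % m) : ℕ) : ZMod (n * m)) ((n * k + j : ℕ) : ZMod (n * m)) := by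
  have h4 := hf4n hn hm
  have key : ((n * ((k + 2) % m) : ℕ) : ZMod (n * m)) + ((n * m - 2 * n + j : ℕ) : ZMod (n * m))
      = ((n * k + j : ℕ) : ZMod (n * m)) := by
    rw [cast_spoke_mod hn hm, ← Nat.cast_add]
    have h1 : n * (k + 2) = n * k + 2 * n := by ring
    have h2 : n * (k + 2) + (n * m - 2 * n + j) = n * m + (n * k + j) := by
      have h3 : n * k + n ≤ n * m := by
        have : n * (k + 1) ≤ n * m := Nat.mul_le_mul_left n hk
        rw [Nat.mul_add, Nat.mul_one] at this
        exact this
      omega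
    rw [h2, Nat.cast_add, ZMod.natCast_self, zero_add]
  have key' : ((n * m - 2 * n + j : ℕ) : ZMod (n * m)) + ((n * ((k + 2) % m) : ℕ) : ZMod (n * m))
      = ((n * k + j : ℕ) : ZMod (n * m)) := by rw [add_comm]; exact key
  have hsub := eq_sub_of_add_eq key'
  unfold cy
  rw [← hsub, val_natCast' hn hm, Nat.mod_eq_of_lt (by omega)]
  omega

private lemma not_MMD_none (hn : 5 ≤ n) (hm : 4 ≤ m) {k : ℕ} (hk : k < m) {j : ℕ} (hj : j ≤ n) :
    ¬ MMD (jahangir n m) none (some ((n * k + j : ℕ) : ZMod (n * m))) := by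
  intro hM
  have hq : (k + 2) % m < m := Nat.mod_lt _ (by omega)
  have hadj := adj_spoke (n := n) hq
  have hle := hM.1 _ hadj
  rw [dist_none_eq hn hm, dist_some_eq hn hm, hf_P hn hm k hj] at hle
  have hcy := far_spoke hn hm hk hj
  have hfw : hf n m ((n * ((k + 2) % m) : ℕ) : ZMod (n * m)) = 1 := by
    unfold hf
    rw [show ((n * ((k+2) % m) : ℕ) : ZMod (n*m)).val % n = 0 from spoke_valmod hn hm _]
    omega
  rw [hfw] at hle
  omega

end Aux6

section Aux7
variable {n m : ℕ}

private lemma far_spoke2 (hn : 5 ≤ n) (hm : 4 ≤ m) {k : ℕ} (hk : k < m) {i : ℕ} (hi : i ≤ n) :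
    n ≤ cy n m ((n * k + i : ℕ) : ZMod (n * m)) ((n * ((k + 2) % m) : ℕ) : ZMod (n * m)) := by
  have h4 := hf4n hn hm
  have h3 : n * k + n ≤ n * m := by
    have : n * (k + 1) ≤ n * m := Nat.mul_le_mul_left n hk
    rw [Nat.mul_add, Nat.mul_one] at this
    exact this
  have key : ((n * k + i : ℕ) : ZMod (n * m)) + ((2 * n - i : ℕ) : ZMod (n * m))
      = ((n * ((k + 2) % m) : ℕ) : ZMod (n * m)) := by
    rw [cast_spoke_mod hn hm, ← Nat.cast_add]
    congr 1
    have h1 : n * (k + 2) = n * k + 2 * n := by ring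
    omega
  have key' : ((2 * n - i : ℕ) : ZMod (n * m)) + ((n * k + i : ℕ) : ZMod (n * m))
      = ((n * ((k + 2) % m) : ℕ) : ZMod (n * m)) := by rw [add_comm]; exact key
  have hsub := eq_sub_of_add_eq key'
  unfold cy
  rw [← hsub, val_natCast' hn hm, Nat.mod_eq_of_lt (by omega)]
  omega

private lemma not_MMD_none' (hn : 5 ≤ n) (hm : 4 ≤ m) {k : ℕ} (hk : k < m) {i : ℕ}
    (hi : i ≤ n) :
    ¬ MMD (jahangir n m) (some ((n * k + i : ℕ) : ZMod (n * m))) none := by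
  intro hM
  have hq : (k + 2) % m < m := Nat.mod_lt _ (by omega)
  have hle := hM.2 _ (adj_spoke (n := n) hq)
  have hfw : hf n m ((n * ((k + 2) % m) : ℕ) : ZMod (n * m)) = 1 := by
    unfold hf
    rw [show ((n * ((k+2) % m) : ℕ) : ZMod (n*m)).val % n = 0 from spoke_valmod hn hm _]
    omega
  rw [dist_some_eq hn hm, hf_P hn hm k hi, hfw,
    SimpleGraph.dist_comm, dist_none_eq hn hm, hf_P hn hm k hi] at hle
  have hcy := far_spoke2 hn hm hk hi
  omega

private lemma P_succ (hn : 5 ≤ n) (hm : 4 ≤ m) (k p : ℕ) :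
    ((n * k + p : ℕ) : ZMod (n * m)) + 1 = ((n * k + (p + 1) : ℕ) : ZMod (n * m)) := by
  push_cast
  ring

private lemma P_pred (hn : 5 ≤ n) (hm : 4 ≤ m) (k : ℕ) {p : ℕ} (hp : 1 ≤ p) :
    ((n * k + p : ℕ) : ZMod (n * m)) - 1 = ((n * k + (p - 1) : ℕ) : ZMod (n * m)) := by
  have h := P_succ hn hm (n := n) (m := m) k (p - 1)
  rw [show p - 1 + 1 = p by omega] at h
  rw [← h]
  ring

private lemma core (hn : 5 ≤ n) (hodd : Odd n) (hm : 4 ≤ m) {k : ℕ} (hk : k < m)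
    {i j : ℕ} (hj : j ≤ n) (hij : i < j) :
    MMD (jahangir n m) (some ((n * k + i : ℕ) : ZMod (n * m)))
        (some ((n * k + j : ℕ) : ZMod (n * m))) ↔
      inU2 n m (some ((n * k + i : ℕ) : ZMod (n * m))) ∧
      inU2 n m (some ((n * k + j : ℕ) : ZMod (n * m))) ∧
      (jahangir n m).dist (some ((n * k + i : ℕ) : ZMod (n * m)))
        (some ((n * k + j : ℕ) : ZMod (n * m))) = n / 2 + 1 := by
  have h2 : 2 ≤ n * m := by have := hfN hn hm; omega
  have h4 := hf4n hn hm
  have hi : i ≤ n := le_trans (le_of_lt hij) hj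
  have hodd' : n % 2 = 1 := Nat.odd_iff.mp hodd
  have hdxy := dist_P hn hm k hij.le hj
  constructor
  · intro hM
    -- i ≠ 0
    have hi0 : 0 < i := by
      by_contra h0
      have hi00 : i = 0 := by omega
      subst hi00
      have hAsp : ((n * k + 0 : ℕ) : ZMod (n * m)).val % n = 0 := by
        rw [P_valmod hn hm]
        exact Nat.zero_mod n
      have hadj : (jahangir n m).Adj (some ((n * k + 0 : ℕ) : ZMod (n * m)))
          (some (((n * k + 0 : ℕ) : ZMod (n * m)) - 1)) := by
        have h := adj_succ h2 (((n * k + 0 : ℕ) : ZMod (n * m)) - 1)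
        rw [sub_add_cancel] at h
        exact h.symm
      have hle := hM.1 _ hadj
      -- compute dist (A-1) B
      have hBA : ((n * k + j : ℕ) : ZMod (n * m)) - (((n * k + 0 : ℕ) : ZMod (n * m)) - 1)
          = ((j + 1 : ℕ) : ZMod (n * m)) := by
        have hs := P_sub hn hm k (show (0:ℕ) ≤ j by omega)
        have : ((n * k + j : ℕ) : ZMod (n * m)) - (((n * k + 0 : ℕ) : ZMod (n * m)) - 1)
            = (((n * k + j : ℕ) : ZMod (n * m)) - ((n * k + 0 : ℕ) : ZMod (n * m))) + 1 := by
          ring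
        rw [this, hs, Nat.sub_zero]
        push_cast
        ring
      have hcy : cy n m (((n * k + 0 : ℕ) : ZMod (n * m)) - 1) ((n * k + j : ℕ) : ZMod (n * m))
          = min (j + 1) (n * m - (j + 1)) := by
        unfold cy
        rw [hBA, val_natCast' hn hm, Nat.mod_eq_of_lt (by omega)]
      rw [dist_some_eq hn hm, hcy, hf_pred_spoke hn hm hAsp, hf_P hn hm k hj, hdxy] at hle
      omega
    -- j ≠ n
    have hjn : j < n := by
      by_contra h0
      have hj00 : j = n := by omega
      have hBsp : ((n * k + j : ℕ) : ZMod (n * m)).val % n = 0 := by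
        rw [P_valmod hn hm, hj00, Nat.mod_self]
      have hadj := adj_succ h2 ((n * k + j : ℕ) : ZMod (n * m))
      have hle := hM.2 _ hadj
      have hBA : (((n * k + j : ℕ) : ZMod (n * m)) + 1) - ((n * k + i : ℕ) : ZMod (n * m))
          = ((j - i + 1 : ℕ) : ZMod (n * m)) := by
        have hs := P_sub hn hm k hij.le
        have heq : (((n * k + j : ℕ) : ZMod (n * m)) + 1) - ((n * k + i : ℕ) : ZMod (n * m))
            = (((n * k + j : ℕ) : ZMod (n * m)) - ((n * k + i : ℕ) : ZMod (n * m))) + 1 := by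
          ring
        rw [heq, hs]
        push_cast
        ring
      have hcy : cy n m ((n * k + i : ℕ) : ZMod (n * m)) (((n * k + j : ℕ) : ZMod (n * m)) + 1)
          = min (j - i + 1) (n * m - (j - i + 1)) := by
        unfold cy
        rw [hBA, val_natCast' hn hm, Nat.mod_eq_of_lt (by omega)]
      rw [dist_some_eq hn hm, hcy, hf_succ_spoke hn hm hBsp, hf_P hn hm k hi, hdxy] at hle
      omega
    refine ⟨(inU2_P hn hm k hi).mpr ⟨hi0, by omega⟩, (inU2_P hn hm k hj).mpr ⟨by omega, hjn⟩, ?_⟩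
    rw [hdxy]
    by_contra hne
    rcases le_or_gt (j - i) ((n - 1) / 2) with hD | hD
    · -- move i down
      have hadj : (jahangir n m).Adj (some ((n * k + i : ℕ) : ZMod (n * m)))
          (some ((n * k + (i - 1) : ℕ) : ZMod (n * m))) := by
        have h := adj_succ h2 ((n * k + (i - 1) : ℕ) : ZMod (n * m))
        rw [P_succ hn hm, show i - 1 + 1 = i by omega] at h
        exact h.symm
      have hle := hM.1 _ hadj
      rw [dist_P hn hm k (show i - 1 ≤ j by omega) hj, hdxy] at hle
      omega
    · -- move i up
      have hadj : (jahangir n m).Adj (some ((n * k + i : ℕ) : ZMod (n * m)))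
          (some ((n * k + (i + 1) : ℕ) : ZMod (n * m))) := by
        rw [← P_succ hn hm]
        exact adj_succ h2 _
      have hle := hM.1 _ hadj
      have hub : min (j - i) (2 + min i (n - i) + min j (n - j)) ≤ n / 2 + 1 := by omega
      have hij1 : i + 1 ≤ j := by omega
      rw [dist_P hn hm k hij1 hj, hdxy] at hle
      omega
  · rintro ⟨hU1, hU2, hd⟩
    rw [inU2_P hn hm k hi] at hU1
    rw [inU2_P hn hm k hj] at hU2
    constructor
    · intro w hw
      rcases adj_some_cases hn hm hw with ⟨rfl, hsp⟩ | rfl | rfl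
      · exfalso
        rw [P_valmod hn hm, Nat.mod_eq_of_lt hU1.2] at hsp
        omega
      · rw [hd, P_succ hn hm]
        exact dist_P_le hn hm k (by omega) hj
      · rw [hd, P_pred hn hm k hU1.1]
        exact dist_P_le hn hm k (by omega) hj
    · intro w hw
      rcases adj_some_cases hn hm hw with ⟨rfl, hsp⟩ | rfl | rfl
      · exfalso
        rw [P_valmod hn hm, Nat.mod_eq_of_lt hU2.2] at hsp
        omega
      · rw [hd, P_succ hn hm]
        exact dist_P_le hn hm k hi (by omega)
      · rw [hd, P_pred hn hm k hU2.1]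
        exact dist_P_le hn hm k hi (by omega)

end Aux7

theorem stmt_17 (n m : ℕ) (hn : 5 ≤ n) (hodd : Odd n) (hm : 4 ≤ m) (k : ℕ) (hk : k < m)
    (x y : Option (ZMod (n * m))) (hxy : x ≠ y)
    (hx : x ∈ internalCycle n m k) (hy : y ∈ internalCycle n m k) :
    MMD (jahangir n m) x y ↔
      inU2 n m x ∧ inU2 n m y ∧ (jahangir n m).dist x y = n / 2 + 1 := by
  simp only [internalCycle, Set.mem_insert_iff, Set.mem_setOf_eq] at hx hy
  rcases hx with rfl | ⟨i, hi, rfl⟩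
  · rcases hy with rfl | ⟨j, hj, rfl⟩
    · exact absurd rfl hxy
    · exact iff_of_false (not_MMD_none hn hm hk hj)
        (by rintro ⟨⟨a, ha, -⟩, -, -⟩; exact nomatch ha)
  · rcases hy with rfl | ⟨j, hj, rfl⟩
    · exact iff_of_false (not_MMD_none' hn hm hk hi)
        (by rintro ⟨-, ⟨a, ha, -⟩, -⟩; exact nomatch ha)
    · have hij : i ≠ j := by
        intro h
        exact hxy (by rw [h])
      rcases lt_or_gt_of_ne hij with h | h
      · exact core hn hodd hm hk hj h
      · have hcore := core hn hodd hm hk hi h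
        constructor
        · intro hM
          obtain ⟨u1, u2, hd⟩ := hcore.mp (MMD_comm hM)
          exact ⟨u2, u1, by rw [SimpleGraph.dist_comm]; exact hd⟩
        · rintro ⟨u1, u2, hd⟩
          exact MMD_comm (hcore.mpr ⟨u2, u1, by rw [SimpleGraph.dist_comm]; exact hd⟩)
end
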